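/- For real z, τ > 0, and natural number m ≥ 0, iterating the conjugated shift identity gives h(z − 1/2, −τ) = (−1)^{m+1} h(z + m + 1/2, −τ) + (2/√τ) e^{−πi/4 − πiz²/τ} F_m(1/2 − z/τ, −1/(2τ)), where F_m(w, σ) = Σ_{k=0}^m exp(2πi(wk + σk²)). -/

import Mathlib

open Complex Real

/-- The Mordell integral for real `z` and `τ > 0`, defined via the rotated contour.
For negative second argument, `h(z, −τ)` is the complex conjugate of `h(z, τ)`. -/
noncomputable def mordellH (z τ : ℝ) : ℂ :=
  2 * Complex.exp (Real.pi * Complex.I / 4) *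
    ∫ y in Set.Ioi (0 : ℝ),
      Complex.exp (-(Real.pi * τ * y ^ 2)) *
        Complex.cosh (2 * Real.pi * z * Complex.exp (Real.pi * Complex.I / 4) * y) /
          Complex.cosh (Real.pi * Complex.exp (Real.pi * Complex.I / 4) * y)

noncomputable def F (m : ℕ) (w σ : ℝ) : ℂ :=
  ∑ k ∈ Finset.range (m + 1), Complex.exp (2 * Real.pi * Complex.I * (w * k + σ * k ^ 2))

open MeasureTheory Set ComplexConjugate

/-!
Adding the integrands of `h(z, τ)` and `h(z + 1, τ)`, the identity
`cosh (V - D) + cosh (V + D) = 2 cosh V cosh D` cancels the denominator `D = π e^{πi/4} y`;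
what is left is even in `y` after symmetrisation, so the half-line integral becomes a complex
Gaussian integral over `ℝ`. This is the one-step identity; conjugating it and iterating
`m + 1` times produces the alternating sum of correction terms, and writing `(-1)^k = e^{πik}`
turns each term into `e^{-πi/4 - πiz²/τ}` times the `k`-th term of `F_m`.
-/

lemma exp_pi_mul_I_div_four : cexp (π * I / 4) = ((√2 / 2 : ℝ) : ℂ) * (1 + I) := by
  rw [show (π : ℂ) * I / 4 = ((π / 4 : ℝ) : ℂ) * I by push_cast; ring, exp_mul_I,
    ← ofReal_cos, ← ofReal_sin, cos_pi_div_four, sin_pi_div_four]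
  ring

lemma exp_pi_mul_I_div_four_sq : cexp (π * I / 4) ^ 2 = I := by
  rw [← Complex.exp_nat_mul,
    show ((2 : ℕ) : ℂ) * (π * I / 4) = π / 2 * I by push_cast; ring]
  exact Complex.exp_pi_div_two_mul_I

lemma one_le_norm_cosh_add_mul_I (x : ℝ) : 1 ≤ ‖Complex.cosh (x + x * I)‖ := by
  have hcosh : Complex.cosh (x + x * I) =
      (Real.cosh x * Real.cos x : ℝ) + (Real.sinh x * Real.sin x : ℝ) * I := by
    rw [Complex.cosh_add, cosh_mul_I, sinh_mul_I, ← ofReal_cosh, ← ofReal_sinh, ← ofReal_cos,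
      ← ofReal_sin]
    push_cast; ring
  -- `|cosh (x + x i)|² = cos² x + sinh² x` and `|sin x| ≤ |x| ≤ |sinh x|`
  have hsin : |Real.sin x| ≤ |Real.sinh x| := Real.abs_sin_le_abs.trans <| by
    rw [Real.abs_sinh]; exact Real.self_le_sinh_iff.mpr (abs_nonneg x)
  have hsq : 1 ≤ normSq (Complex.cosh (x + x * I)) := by
    rw [hcosh, normSq_add_mul_I]
    nlinarith [Real.cosh_sq x, Real.sin_sq_add_cos_sq x, sq_le_sq.mpr hsin]
  rw [normSq_eq_norm_sq] at hsq
  nlinarith [norm_nonneg (Complex.cosh (x + x * I))]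

lemma one_le_norm_cosh_pi_mul_exp (y : ℝ) :
    1 ≤ ‖Complex.cosh (π * cexp (π * I / 4) * y)‖ := by
  convert one_le_norm_cosh_add_mul_I (π * (√2 / 2) * y) using 3
  rw [exp_pi_mul_I_div_four]; push_cast; ring

noncomputable def mordellIntegrand (z τ y : ℝ) : ℂ :=
  cexp (-(π * τ * y ^ 2)) * Complex.cosh (2 * π * z * cexp (π * I / 4) * y) /
    Complex.cosh (π * cexp (π * I / 4) * y)

lemma mordellH_eq_integral (z τ : ℝ) :
    mordellH z τ = 2 * cexp (π * I / 4) * ∫ y in Ioi 0, mordellIntegrand z τ y := rfl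

lemma cexp_mul_cosh (w v : ℂ) :
    cexp w * Complex.cosh v = (cexp (w + v) + cexp (w + -v)) / 2 := by
  rw [Complex.cosh, Complex.exp_add, Complex.exp_add]
  ring

lemma re_neg_pi_mul_neg {τ : ℝ} (hτ : 0 < τ) : (-(π * τ : ℂ)).re < 0 := by
  simpa using mul_pos pi_pos hτ

lemma integrable_cexp_mul_cosh {b : ℂ} (hb : b.re < 0) (a : ℂ) :
    Integrable (fun y : ℝ ↦ cexp (b * y ^ 2) * Complex.cosh (a * y)) := by
  simp_rw [cexp_mul_cosh]
  refine (Integrable.add ?_ ?_).div_const 2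
  · simpa using integrable_cexp_quadratic' hb a 0
  · simpa using integrable_cexp_quadratic' hb (-a) 0

lemma integrable_mordellIntegrand (z : ℝ) {τ : ℝ} (hτ : 0 < τ) :
    Integrable (mordellIntegrand z τ) := by
  have hb := re_neg_pi_mul_neg hτ
  have hnum := integrable_cexp_mul_cosh hb (2 * π * z * cexp (π * I / 4))
  have hcosh_ne (y : ℝ) : Complex.cosh (π * cexp (π * I / 4) * y) ≠ 0 :=
    norm_pos_iff.mp (one_pos.trans_le (one_le_norm_cosh_pi_mul_exp y))
  refine (hnum.mul_bdd (g := fun y : ℝ ↦ (Complex.cosh (π * cexp (π * I / 4) * y))⁻¹)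
    (c := 1) ?_ (ae_of_all _ fun y ↦ ?_)).congr (ae_of_all _ fun y ↦ ?_)
  · exact (Continuous.inv₀ (by fun_prop) hcosh_ne).aestronglyMeasurable
  · simpa [norm_inv] using inv_le_one_of_one_le₀ (one_le_norm_cosh_pi_mul_exp y)
  · simp only [mordellIntegrand, div_eq_mul_inv]
    ring_nf

lemma mordellIntegrand_add_mordellIntegrand_add_one (z τ y : ℝ) :
    mordellIntegrand z τ y + mordellIntegrand (z + 1) τ y =
      cexp (-(π * τ) * y ^ 2 + π * (2 * z + 1) * cexp (π * I / 4) * y) +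
        cexp (-(π * τ) * (-y : ℝ) ^ 2 + π * (2 * z + 1) * cexp (π * I / 4) * (-y : ℝ)) := by
  set D : ℂ := π * cexp (π * I / 4) * y
  set V : ℂ := π * (2 * z + 1) * cexp (π * I / 4) * y
  have hD : Complex.cosh D ≠ 0 :=
    norm_pos_iff.mp (one_pos.trans_le (one_le_norm_cosh_pi_mul_exp y))
  have hsum :
      Complex.cosh (V - D) + Complex.cosh (V + D) = 2 * Complex.cosh V * Complex.cosh D := by
    rw [Complex.cosh_sub, Complex.cosh_add]; ring
  calc mordellIntegrand z τ y + mordellIntegrand (z + 1) τ y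
      = cexp (-(π * τ) * y ^ 2) * (Complex.cosh (V - D) + Complex.cosh (V + D)) /
          Complex.cosh D := by
        simp only [mordellIntegrand, V, D]; push_cast; ring_nf
    _ = 2 * (cexp (-(π * τ) * y ^ 2) * Complex.cosh V) := by
        rw [hsum]; field_simp
    _ = _ := by
        rw [cexp_mul_cosh]; simp only [V]; push_cast; ring_nf

lemma integral_Ioi_zero_add_comp_neg {E : Type*} [NormedAddCommGroup E] [NormedSpace ℝ E]
    {f : ℝ → E} (hf : Integrable f) : ∫ y in Ioi 0, (f y + f (-y)) = ∫ y, f y := by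
  rw [integral_add hf.integrableOn hf.comp_neg.integrableOn, integral_comp_neg_Ioi, neg_zero,
    add_comm, intervalIntegral.integral_Iic_add_Ioi hf.integrableOn hf.integrableOn]

lemma integral_cexp_gaussian_shift (z : ℝ) {τ : ℝ} (hτ : 0 < τ) :
    ∫ y : ℝ, cexp (-(π * τ) * y ^ 2 + π * (2 * z + 1) * cexp (π * I / 4) * y) =
      (√τ : ℂ)⁻¹ * cexp (π * I * (z + 1 / 2) ^ 2 / τ) := by
  have hb := re_neg_pi_mul_neg hτ
  have hτ0 : (τ : ℂ) ≠ 0 := by exact_mod_cast hτ.ne'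
  have hπ : (π : ℂ) ≠ 0 := by exact_mod_cast pi_ne_zero
  have hsqrt : ((π / -(-(π * τ)) : ℂ)) ^ (1 / 2 : ℂ) = (√τ : ℂ)⁻¹ := by
    rw [neg_neg, div_mul_cancel_left₀ hπ, ← ofReal_inv,
      show (1 / 2 : ℂ) = ((1 / 2 : ℝ) : ℂ) by simp, ← ofReal_cpow (inv_nonneg.mpr hτ.le),
      ← Real.sqrt_eq_rpow, Real.sqrt_inv, ofReal_inv]
  have hquad := integral_cexp_quadratic hb (π * (2 * z + 1) * cexp (π * I / 4)) 0
  simp only [add_zero, zero_sub] at hquad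
  rw [hquad, hsqrt, mul_pow, exp_pi_mul_I_div_four_sq]
  congr 2
  field_simp
  ring

lemma mordellH_add_mordellH_add_one (z : ℝ) {τ : ℝ} (hτ : 0 < τ) :
    mordellH z τ + mordellH (z + 1) τ =
      2 / √τ * cexp (π * I / 4 + π * I * (z + 1 / 2) ^ 2 / τ) := by
  have hsqrt : (√τ : ℂ) ≠ 0 := by exact_mod_cast (Real.sqrt_pos.mpr hτ).ne'
  rw [mordellH_eq_integral, mordellH_eq_integral, ← mul_add,
    ← integral_add (integrable_mordellIntegrand z hτ).integrableOn
      (integrable_mordellIntegrand (z + 1) hτ).integrableOn,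
    setIntegral_congr_fun measurableSet_Ioi fun y _ ↦
      mordellIntegrand_add_mordellIntegrand_add_one z τ y,
    integral_Ioi_zero_add_comp_neg (f := fun y : ℝ ↦
      cexp (-(π * τ) * y ^ 2 + π * (2 * z + 1) * cexp (π * I / 4) * y))
      (by simpa using integrable_cexp_quadratic' (re_neg_pi_mul_neg hτ) _ 0),
    integral_cexp_gaussian_shift z hτ, Complex.exp_add]
  field_simp

lemma conj_mordellH_sub_half (x : ℝ) {τ : ℝ} (hτ : 0 < τ) :
    conj (mordellH (x - 1 / 2) τ) =
      -conj (mordellH (x + 1 / 2) τ) + 2 / √τ * cexp (-(π * I / 4) - π * I * x ^ 2 / τ) := by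
  have h := congrArg conj (mordellH_add_mordellH_add_one (x - 1 / 2) hτ)
  have harg : conj (π * I / 4 + π * I * ((x - 1 / 2 : ℝ) + 1 / 2) ^ 2 / τ : ℂ) =
      -(π * I / 4) - π * I * x ^ 2 / τ := by
    simp only [map_add, map_div₀, map_mul, map_pow, map_one, conj_I, conj_ofReal, map_ofNat]
    push_cast
    ring
  rw [show x - 1 / 2 + 1 = x + 1 / 2 by ring, map_add, map_mul, ← Complex.exp_conj, harg,
    map_div₀, conj_ofReal, map_ofNat] at h
  linear_combination h

lemma eq_neg_one_pow_mul_add_sum_of_eq_neg_add {R : Type*} [CommRing R] {g c : ℕ → R}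
    (h : ∀ k, g k = -g (k + 1) + c k) (m : ℕ) :
    g 0 = (-1) ^ (m + 1) * g (m + 1) + ∑ k ∈ Finset.range (m + 1), (-1) ^ k * c k := by
  induction m with
  | zero => simpa using h 0
  | succ m ih => rw [ih, h (m + 1), Finset.sum_range_succ _ (m + 1)]; ring

lemma neg_one_pow_mul_cexp_shift (z τ : ℝ) (k : ℕ) :
    (-1) ^ k * cexp (-(π * I / 4) - π * I * (z + k : ℝ) ^ 2 / τ) =
      cexp (-(π * I / 4) - π * I * z ^ 2 / τ) *
        cexp (2 * π * I * ((1 / 2 - z / τ : ℝ) * k + (-1 / (2 * τ) : ℝ) * k ^ 2)) := by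
  rw [show (-1 : ℂ) ^ k = cexp (k * (π * I)) by rw [Complex.exp_nat_mul, exp_pi_mul_I],
    ← Complex.exp_add, ← Complex.exp_add]
  congr 1
  push_cast
  ring

theorem mordell_iterated_shift (z τ : ℝ) (hτ : 0 < τ) (m : ℕ) :
    (starRingEnd ℂ) (mordellH (z - 1 / 2) τ) =
      (-1 : ℂ) ^ (m + 1) * (starRingEnd ℂ) (mordellH (z + m + 1 / 2) τ) +
        2 / Real.sqrt τ *
          Complex.exp (-(Real.pi * Complex.I / 4) - Real.pi * Complex.I * z ^ 2 / τ) *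
            F m (1 / 2 - z / τ) (-1 / (2 * τ)) := by
  have key := eq_neg_one_pow_mul_add_sum_of_eq_neg_add
    (g := fun k : ℕ ↦ conj (mordellH (z + k - 1 / 2) τ))
    (c := fun k : ℕ ↦ 2 / √τ * cexp (-(π * I / 4) - π * I * (z + k : ℝ) ^ 2 / τ))
    (fun k ↦ by
      rw [Nat.cast_succ, show z + (k + 1) - 1 / 2 = z + k + 1 / 2 by ring]
      exact conj_mordellH_sub_half (z + k) hτ) m
  rw [Nat.cast_zero, add_zero, Nat.cast_succ, show z + (m + 1) - 1 / 2 = z + m + 1 / 2 by ring]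
    at key
  rw [key, F, Finset.mul_sum]
  congr 1
  refine Finset.sum_congr rfl fun k _ ↦ ?_
  rw [mul_assoc (2 / (√τ : ℂ)), ← neg_one_pow_mul_cexp_shift]
  ring
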